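/- Let f : [0,1] → ℝ be defined piecewise by f(t) = 0 on [0,1/5], f(t) = 5/6 − 1/(6t) − (1/6)·ln(5t) on [1/5,1/2], f(t) = 1/2 − (1/6)·ln(5−5t) on [1/2,4/5], and f(t) = 1/2 on [4/5,1], and define A(t1,t2) := f(t1) − f(t2) + 1/2 for t1, t2 ∈ [0,1]. Then the symmetric mechanism described by A is strategyproof: for all b1, b2, t1 ∈ [0,1], û^A(b1,b2) ≥ b1·A(t1,b2) + (1−b1)·A(1−t1,1−b2). -/

import Mathlib

/-- The piecewise function `f` from the 5/6-competitive full mechanism for two items. -/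
noncomputable def f (t : ℝ) : ℝ :=
  if t ≤ 1/5 then 0
  else if t ≤ 1/2 then 5/6 - 1/(6*t) - (1/6) * Real.log (5*t)
  else if t ≤ 4/5 then 1/2 - (1/6) * Real.log (5 - 5*t)
  else 1/2

/-- The allocation function of the 5/6-competitive full mechanism. -/
noncomputable def A (t1 t2 : ℝ) : ℝ := f t1 - f t2 + 1/2

/-- The utility attained by agent 1 in the symmetric two-item mechanism described by `A`
when her true utility vector is `(b1, 1-b1)`, she bids truthfully, and agent 2 bids `b2`. -/
noncomputable def uhat (b1 b2 : ℝ) : ℝ :=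
  b1 * A b1 b2 + (1 - b1) * A (1 - b1) (1 - b2)

lemma f_eq1 {t : ℝ} (h : t ≤ 1/5) : f t = 0 := by
  unfold f
  rw [if_pos h]

lemma f_eq2 {t : ℝ} (h1 : 1/5 ≤ t) (h2 : t ≤ 1/2) :
    f t = 5/6 - 1/(6*t) - (1/6) * Real.log (5*t) := by
  unfold f
  rcases lt_or_ge (1/5 : ℝ) t with h | h
  · rw [if_neg (by linarith), if_pos h2]
  · have ht : t = 1/5 := le_antisymm h h1
    subst ht
    rw [if_pos le_rfl]
    norm_num

lemma f_eq3 {t : ℝ} (h1 : 1/2 ≤ t) (h2 : t ≤ 4/5) :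
    f t = 1/2 - (1/6) * Real.log (5 - 5*t) := by
  unfold f
  rcases lt_or_ge (1/2 : ℝ) t with h | h
  · rw [if_neg (by linarith), if_neg (by linarith), if_pos h2]
  · have ht : t = 1/2 := le_antisymm h h1
    subst ht
    rw [if_neg (by norm_num), if_pos le_rfl]
    norm_num

lemma f_eq4 {t : ℝ} (h1 : 4/5 ≤ t) : f t = 1/2 := by
  unfold f
  rcases lt_or_ge (4/5 : ℝ) t with h | h
  · rw [if_neg (by linarith), if_neg (by linarith), if_neg (by linarith)]
  · have ht : t = 4/5 := le_antisymm h h1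
    subst ht
    rw [if_neg (by norm_num), if_neg (by norm_num), if_pos le_rfl]
    norm_num

/-- Gluing lemma for monotonicity on adjacent intervals. -/
lemma monotoneOn_glue {g : ℝ → ℝ} {a c d : ℝ} (hac : a ≤ c) (hcd : c ≤ d)
    (h1 : MonotoneOn g (Set.Icc a c)) (h2 : MonotoneOn g (Set.Icc c d)) :
    MonotoneOn g (Set.Icc a d) := by
  intro x hx y hy hxy
  rcases le_total y c with h | h
  · exact h1 ⟨hx.1, le_trans hxy h⟩ ⟨hy.1, h⟩ hxy
  rcases le_total x c with h' | h'
  · calc g x ≤ g c := h1 ⟨hx.1, h'⟩ ⟨hac, le_rfl⟩ h'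
      _ ≤ g y := h2 ⟨le_rfl, hcd⟩ ⟨h, hy.2⟩ h
  · exact h2 ⟨h', hx.2⟩ ⟨h, hy.2⟩ hxy

/-- derivative of the piece-2 formula for φ. -/
lemma hasDerivAt_F2 (b : ℝ) {x : ℝ} (hx : 0 < x) :
    HasDerivAt (fun t => b * (5/6 - 1/(6*t) - (1/6) * Real.log (5*t))
      + (1-b) * (1/2 - (1/6) * Real.log (5*t))) ((b - x)/(6*x^2)) x := by
  have hlog : HasDerivAt (fun t : ℝ => Real.log (5*t)) (1/x) x := by
    have h1 : HasDerivAt (fun t : ℝ => 5*t) 5 x := by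
      simpa using (hasDerivAt_id x).const_mul (5:ℝ)
    have h2 := (Real.hasDerivAt_log (by positivity : (5:ℝ)*x ≠ 0)).comp x h1
    refine h2.congr_deriv ?_
    field_simp
  have hinv : HasDerivAt (fun t : ℝ => 1/(6*t)) (-(1/(6*x^2))) x := by
    have h1 : HasDerivAt (fun t : ℝ => 6*t) 6 x := by
      simpa using (hasDerivAt_id x).const_mul (6:ℝ)
    have h2 := h1.inv (by positivity : (6:ℝ)*x ≠ 0)
    have : (fun t : ℝ => 1/(6*t)) = fun t : ℝ => ((6*t)⁻¹) := by
      funext t; rw [one_div]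
    rw [this]
    refine h2.congr_deriv ?_
    field_simp
  have h3 : HasDerivAt (fun t => b * (5/6 - 1/(6*t) - (1/6) * Real.log (5*t))
      + (1-b) * (1/2 - (1/6) * Real.log (5*t)))
      (b * (0 - (-(1/(6*x^2))) - (1/6) * (1/x)) + (1-b) * (0 - (1/6) * (1/x))) x := by
    exact ((((hasDerivAt_const x (5/6:ℝ)).sub hinv).sub (hlog.const_mul (1/6))).const_mul b).add
      (((hasDerivAt_const x (1/2:ℝ)).sub (hlog.const_mul (1/6))).const_mul (1-b))
  convert h3 using 1
  field_simp
  ring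

/-- derivative of the piece-3 formula for φ. -/
lemma hasDerivAt_F3 (b : ℝ) {x : ℝ} (hx : x < 1) :
    HasDerivAt (fun t => b * (1/2 - (1/6) * Real.log (5 - 5*t))
      + (1-b) * (5/6 - 1/(6*(1-t)) - (1/6) * Real.log (5 - 5*t))) ((b - x)/(6*(1-x)^2)) x := by
  have h1x : (0:ℝ) < 1 - x := by linarith
  have hlog : HasDerivAt (fun t : ℝ => Real.log (5 - 5*t)) (-(1/(1-x))) x := by
    have h1 : HasDerivAt (fun t : ℝ => 5 - 5*t) (-5) x := by
      exact ((hasDerivAt_const x (5:ℝ)).sub ((hasDerivAt_id x).const_mul (5:ℝ))).congr_deriv (by norm_num)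
    have hne5 : (5:ℝ) - 5*x ≠ 0 := by linarith
    have h2 := (Real.hasDerivAt_log hne5).comp x h1
    refine h2.congr_deriv ?_
    have hne : (1:ℝ) - x ≠ 0 := h1x.ne'
    field_simp
  have hinv : HasDerivAt (fun t : ℝ => 1/(6*(1-t))) (1/(6*(1-x)^2)) x := by
    have h1 : HasDerivAt (fun t : ℝ => 6*(1-t)) (-6) x := by
      have : HasDerivAt (fun t : ℝ => 1 - t) (-1) x := by
        exact ((hasDerivAt_const x (1:ℝ)).sub (hasDerivAt_id x)).congr_deriv (by norm_num)
      simpa using this.const_mul (6:ℝ)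
    have h2 := h1.inv (by positivity : (6:ℝ)*(1-x) ≠ 0)
    have : (fun t : ℝ => 1/(6*(1-t))) = fun t : ℝ => ((6*(1-t))⁻¹) := by
      funext t; rw [one_div]
    rw [this]
    refine h2.congr_deriv ?_
    field_simp
  have h3 : HasDerivAt (fun t => b * (1/2 - (1/6) * Real.log (5 - 5*t))
      + (1-b) * (5/6 - 1/(6*(1-t)) - (1/6) * Real.log (5 - 5*t)))
      (b * (0 - (1/6) * (-(1/(1-x)))) + (1-b) * (0 - 1/(6*(1-x)^2) - (1/6) * (-(1/(1-x))))) x := by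
    exact (((hasDerivAt_const x (1/2:ℝ)).sub (hlog.const_mul (1/6))).const_mul b).add
      ((((hasDerivAt_const x (5/6:ℝ)).sub hinv).sub (hlog.const_mul (1/6))).const_mul (1-b))
  convert h3 using 1
  field_simp
  ring

/-- φ agrees with the piece-2 formula on [1/5, 1/2]. -/
lemma phi_eq2 (b : ℝ) {t : ℝ} (h1 : 1/5 ≤ t) (h2 : t ≤ 1/2) :
    b * f t + (1-b) * f (1-t)
      = b * (5/6 - 1/(6*t) - (1/6) * Real.log (5*t)) + (1-b) * (1/2 - (1/6) * Real.log (5*t)) := by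
  rw [f_eq2 h1 h2, f_eq3 (by linarith) (by linarith),
    show (5:ℝ) - 5*(1-t) = 5*t by ring]

/-- φ agrees with the piece-3 formula on [1/2, 4/5]. -/
lemma phi_eq3 (b : ℝ) {t : ℝ} (h1 : 1/2 ≤ t) (h2 : t ≤ 4/5) :
    b * f t + (1-b) * f (1-t)
      = b * (1/2 - (1/6) * Real.log (5 - 5*t))
        + (1-b) * (5/6 - 1/(6*(1-t)) - (1/6) * Real.log (5 - 5*t)) := by
  rw [f_eq3 h1 h2, f_eq2 (by linarith) (by linarith),
    show (5:ℝ)*(1-t) = 5 - 5*t by ring, show (6:ℝ)*(1-t) = 6*(1-t) by ring]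

lemma mono_piece1 (b c : ℝ) (hc : c ≤ 1/5) :
    MonotoneOn (fun t => b * f t + (1-b) * f (1-t)) (Set.Icc 0 c) := by
  intro x hx y hy _
  have ex : b * f x + (1-b) * f (1-x) = (1-b) * (1/2) := by
    rw [f_eq1 (le_trans hx.2 hc), f_eq4 (by have := hx.2; linarith)]
    ring
  have ey : b * f y + (1-b) * f (1-y) = (1-b) * (1/2) := by
    rw [f_eq1 (le_trans hy.2 hc), f_eq4 (by have := hy.2; linarith)]
    ring
  simp only [ex, ey, le_refl]

lemma mono_piece2 (b c : ℝ) (hc2 : c ≤ 1/2) (hcb : c ≤ b) :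
    MonotoneOn (fun t => b * f t + (1-b) * f (1-t)) (Set.Icc (1/5) c) := by
  set F2 : ℝ → ℝ := fun t => b * (5/6 - 1/(6*t) - (1/6) * Real.log (5*t))
      + (1-b) * (1/2 - (1/6) * Real.log (5*t)) with hF2
  have hmono : MonotoneOn F2 (Set.Icc (1/5) c) := by
    apply monotoneOn_of_deriv_nonneg (convex_Icc _ _)
    · intro x hx
      exact (hasDerivAt_F2 b (by have := hx.1; linarith)).continuousAt.continuousWithinAt
    · intro x hx
      rw [interior_Icc] at hx
      exact (hasDerivAt_F2 b (by have := hx.1; linarith)).differentiableAt.differentiableWithinAt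
    · intro x hx
      rw [interior_Icc] at hx
      rw [(hasDerivAt_F2 b (by have := hx.1; linarith : (0:ℝ) < x)).deriv]
      have hx2 : (0:ℝ) < x := by have := hx.1; linarith
      have hxb : x ≤ b := le_trans (le_of_lt hx.2) hcb
      apply div_nonneg (by linarith)
      positivity
  intro x hx y hy hxy
  have ex := phi_eq2 b hx.1 (le_trans hx.2 hc2)
  have ey := phi_eq2 b hy.1 (le_trans hy.2 hc2)
  simp only [ex, ey]
  exact hmono hx hy hxy

lemma mono_piece3 (b c : ℝ) (hc2 : c ≤ 4/5) (hcb : c ≤ b) :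
    MonotoneOn (fun t => b * f t + (1-b) * f (1-t)) (Set.Icc (1/2) c) := by
  set F3 : ℝ → ℝ := fun t => b * (1/2 - (1/6) * Real.log (5 - 5*t))
      + (1-b) * (5/6 - 1/(6*(1-t)) - (1/6) * Real.log (5 - 5*t)) with hF3
  have hmono : MonotoneOn F3 (Set.Icc (1/2) c) := by
    apply monotoneOn_of_deriv_nonneg (convex_Icc _ _)
    · intro x hx
      exact (hasDerivAt_F3 b (by have := hx.2; linarith)).continuousAt.continuousWithinAt
    · intro x hx
      rw [interior_Icc] at hx
      exact (hasDerivAt_F3 b (by have := hx.2; linarith)).differentiableAt.differentiableWithinAt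
    · intro x hx
      rw [interior_Icc] at hx
      have hx1 : x < 1 := by have := hx.2; linarith
      rw [(hasDerivAt_F3 b hx1).deriv]
      have h1 : (0:ℝ) < 1 - x := by linarith
      have hxb : x ≤ b := le_trans (le_of_lt hx.2) hcb
      apply div_nonneg (by linarith)
      positivity
  intro x hx y hy hxy
  have ex := phi_eq3 b hx.1 (le_trans hx.2 hc2)
  have ey := phi_eq3 b hy.1 (le_trans hy.2 hc2)
  simp only [ex, ey]
  exact hmono hx hy hxy

lemma mono_piece4 (b c : ℝ) (hc : 4/5 ≤ c) (hc1 : c ≤ 1) :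
    MonotoneOn (fun t => b * f t + (1-b) * f (1-t)) (Set.Icc (4/5) c) := by
  intro x hx y hy _
  have ex : b * f x + (1-b) * f (1-x) = b * (1/2) := by
    rw [f_eq4 hx.1, f_eq1 (by have := hx.1; linarith)]
    ring
  have ey : b * f y + (1-b) * f (1-y) = b * (1/2) := by
    rw [f_eq4 hy.1, f_eq1 (by have := hy.1; linarith)]
    ring
  simp only [ex, ey, le_refl]

lemma phi_mono (b : ℝ) (hb0 : 0 ≤ b) (hb1 : b ≤ 1) :
    MonotoneOn (fun t => b * f t + (1-b) * f (1-t)) (Set.Icc 0 b) := by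
  rcases le_total b (1/5) with h1 | h1
  · exact mono_piece1 b b h1
  rcases le_total b (1/2) with h2 | h2
  · exact monotoneOn_glue (by norm_num) h1 (mono_piece1 b (1/5) le_rfl)
      (mono_piece2 b b h2 le_rfl)
  rcases le_total b (4/5) with h3 | h3
  · exact monotoneOn_glue (by norm_num) h2
      (monotoneOn_glue (by norm_num) (by norm_num) (mono_piece1 b (1/5) le_rfl)
        (mono_piece2 b (1/2) le_rfl h2))
      (mono_piece3 b b h3 le_rfl)
  · exact monotoneOn_glue (by norm_num) h3
      (monotoneOn_glue (by norm_num) (by norm_num)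
        (monotoneOn_glue (by norm_num) (by norm_num) (mono_piece1 b (1/5) le_rfl)
          (mono_piece2 b (1/2) le_rfl h2))
        (mono_piece3 b (4/5) le_rfl h3))
      (mono_piece4 b b h3 hb1)

lemma key (b t : ℝ) (hb : b ∈ Set.Icc (0:ℝ) 1) (ht : t ∈ Set.Icc (0:ℝ) 1) :
    b * f t + (1-b) * f (1-t) ≤ b * f b + (1-b) * f (1-b) := by
  rcases le_total t b with h | h
  · exact phi_mono b hb.1 hb.2 ⟨ht.1, h⟩ ⟨hb.1, le_rfl⟩ h
  · have h' : 1 - t ≤ 1 - b := by linarith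
    have := phi_mono (1-b) (by linarith [hb.2]) (by linarith [hb.1])
      ⟨by linarith [ht.2], h'⟩ ⟨by linarith [hb.2], le_rfl⟩ h'
    simp only at this
    rw [show (1:ℝ) - (1-t) = t by ring, show (1:ℝ) - (1-b) = b by ring] at this
    linarith

/-- The symmetric mechanism described by `A(t1,t2) = f(t1) − f(t2) + 1/2` is
strategyproof. -/
theorem A_strategyproof :
    ∀ b1 ∈ Set.Icc (0 : ℝ) 1, ∀ b2 ∈ Set.Icc (0 : ℝ) 1, ∀ t1 ∈ Set.Icc (0 : ℝ) 1,
      uhat b1 b2 ≥ b1 * A t1 b2 + (1 - b1) * A (1 - t1) (1 - b2) := by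
  intro b1 hb1 b2 _ t1 ht1
  have h := key b1 t1 hb1 ht1
  simp only [uhat, A]
  nlinarith [h]
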